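/- arXiv:1002.1886 — 4 statements merged into one kernel-verified Lean document; each statement's English description precedes it below -/
import Mathlib

section
/- For any dissociated set Λ in the dual of a finite abelian group G, any complex coefficients a_ξ for ξ ∈ Λ, and any positive integer p ≥ 2, the average over x ∈ G of |∑_{ξ∈Λ} a_ξ e^{2πi ξ·x}|^p is at most (C√p)^p (∑_{ξ∈Λ} |a_ξ|²)^{p/2} for an absolute constant C > 0. -/
/-!
Dissociativity makes the characters behave like independent random signs: averaging
`∏ ψ, (c ψ + Re (d ψ * ψ x))` over `x` kills every term of its expansion except `∏ ψ, c ψ`.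
Bounding `exp` on `[-‖d ψ‖, ‖d ψ‖]` by its chord and using `cosh t ≤ exp (t² / 2)` then gives the
subgaussian estimate `𝔼 x, exp (Re f x) ≤ exp (‖d‖₂² / 2)` for `f = ∑ ψ, d ψ * ψ`. Dominating
`‖z‖ ^ p` by exponentials of `c Re (I ^ k z)` in the four directions `I ^ k` turns this into a
moment bound, optimised at `c = √p / ‖d‖₂`. Since `e` is an injection between groups of the same
size, `Λ` can be transported to the dual group.
-/

open Finset Real
open scoped BigOperators

namespace Real

lemma exp_le_cosh_add_sinh_div_mul {c t : ℝ} (hc : 0 < c) (ht : |t| ≤ c) :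
    exp t ≤ cosh c + sinh c / c * t := by
  obtain ⟨ht₁, ht₂⟩ := abs_le.1 ht
  have hchord := convexOn_exp.2 (Set.mem_univ (-c)) (Set.mem_univ c)
    (div_nonneg (by linarith) (by linarith) : 0 ≤ (c - t) / (2 * c))
    (div_nonneg (by linarith) (by linarith) : 0 ≤ (c + t) / (2 * c)) (by field_simp; ring)
  have hpoint : ((c - t) / (2 * c)) • (-c) + ((c + t) / (2 * c)) • c = t := by
    simp only [smul_eq_mul]; field_simp; ring
  rw [hpoint] at hchord
  refine hchord.trans_eq ?_
  simp only [smul_eq_mul, cosh_eq, sinh_eq]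
  field_simp
  ring

lemma pow_le_mul_exp_mul {u : ℝ} (hu : 0 ≤ u) {c : ℝ} (hc : 0 < c) (p : ℕ) :
    u ^ p ≤ (p / (c * exp 1)) ^ p * exp (c * u) := by
  rcases p.eq_zero_or_pos with rfl | hp
  · simpa using one_le_exp (mul_nonneg hc.le hu)
  have hp' : (0 : ℝ) < p := by exact_mod_cast hp
  have hbase : u ≤ p / (c * exp 1) * exp (c * u / p) := by
    have h := add_one_le_exp (c * u / p - 1)
    rw [sub_add_cancel, exp_sub] at h
    rw [div_mul_eq_mul_div, le_div_iff₀ (by positivity)]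
    rw [le_div_iff₀ (exp_pos 1)] at h
    calc u * (c * exp 1) = p * (c * u / p * exp 1) := by field_simp
      _ ≤ p * exp (c * u / p) := by gcongr
  calc u ^ p ≤ (p / (c * exp 1) * exp (c * u / p)) ^ p := by gcongr
    _ = (p / (c * exp 1)) ^ p * exp (c * u) := by
      rw [mul_pow, ← exp_nat_mul, mul_div_cancel₀ _ hp'.ne']

lemma sqrt_two_mul_exp_half_le_exp_one : √2 * exp (1 / 2) ≤ exp 1 := by
  have h : exp 1 = exp (1 / 2) * exp (1 / 2) := by rw [← exp_add]; norm_num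
  rw [h]
  gcongr
  rw [exp_half]
  exact sqrt_le_sqrt (by linarith [add_one_le_exp 1])

end Real

namespace Complex

lemma exp_re_mul_le_cosh_add {z w : ℂ} (hw : ‖w‖ = 1) :
    Real.exp (z * w).re ≤ Real.cosh ‖z‖ + Real.sinh ‖z‖ / ‖z‖ * (z * w).re := by
  rcases eq_or_ne z 0 with rfl | hz
  · simp
  refine Real.exp_le_cosh_add_sinh_div_mul (norm_pos_iff.2 hz) ?_
  simpa [hw] using abs_re_le_norm (z * w)

lemma norm_pow_le_sum_exp_re (z : ℂ) {c : ℝ} (hc : 0 < c) (p : ℕ) :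
    ‖z‖ ^ p ≤ (√2 * p / (c * Real.exp 1)) ^ p * ∑ k ∈ range 4, Real.exp (c * (I ^ k * z).re) := by
  set m := max |z.re| |z.im| with hm
  have habs (t : ℝ) : Real.exp (c * |t|) ≤ Real.exp (c * t) + Real.exp (-(c * t)) := by
    rcases abs_cases t with ⟨h, -⟩ | ⟨h, -⟩ <;> rw [h]
    · exact le_add_of_nonneg_right (Real.exp_pos _).le
    · exact mul_neg c t ▸ le_add_of_nonneg_left (Real.exp_pos _).le
  have hexp : Real.exp (c * m) ≤ ∑ k ∈ range 4, Real.exp (c * (I ^ k * z).re) := by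
    have hre := habs z.re
    have him := habs z.im
    simp only [sum_range_succ, range_zero, sum_empty, zero_add, pow_zero, one_mul, pow_one, I_sq,
      I_pow_three, neg_mul, I_mul_re, neg_re, mul_neg, neg_neg]
    rcases le_total |z.re| |z.im| with h | h <;> simp only [hm, h, max_eq_left, max_eq_right] <;>
      linarith [Real.exp_pos (c * z.re), Real.exp_pos (-(c * z.re)), Real.exp_pos (c * z.im),
        Real.exp_pos (-(c * z.im))]
  calc ‖z‖ ^ p ≤ (√2 * m) ^ p := by gcongr; exact norm_le_sqrt_two_mul_max z
    _ ≤ √2 ^ p * ((p / (c * Real.exp 1)) ^ p * Real.exp (c * m)) := by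
      rw [mul_pow]; gcongr; exact Real.pow_le_mul_exp_mul (by positivity) hc p
    _ ≤ (√2 * p / (c * Real.exp 1)) ^ p * ∑ k ∈ range 4, Real.exp (c * (I ^ k * z).re) := by
      rw [mul_div_assoc, mul_pow, mul_assoc]; gcongr

end Complex

section

variable {G : Type*} [AddCommGroup G] [Fintype G]

lemma AddDissociated.expect_exp_re_sum_le {d : AddChar G ℂ → ℂ}
    (hd : AddDissociated {ψ | d ψ ≠ 0}) :
    𝔼 x, exp (∑ ψ, d ψ * ψ x).re ≤ exp ((∑ ψ, ‖d ψ‖ ^ 2) / 2) := by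
  set r : AddChar G ℂ → ℝ := fun ψ ↦ sinh ‖d ψ‖ / ‖d ψ‖
  have hpoint (x : G) : exp (∑ ψ, d ψ * ψ x).re ≤
      ∏ ψ, (cosh ‖d ψ‖ + ((r ψ * d ψ : ℂ) * ψ x).re) := by
    rw [Complex.re_sum, exp_sum]
    gcongr with ψ
    rw [mul_assoc, Complex.re_ofReal_mul]
    exact Complex.exp_re_mul_le_cosh_add (ψ.norm_apply x)
  calc 𝔼 x, exp (∑ ψ, d ψ * ψ x).re
      ≤ 𝔼 x, ∏ ψ, (cosh ‖d ψ‖ + ((r ψ * d ψ : ℂ) * ψ x).re) := expect_le_expect fun x _ ↦ hpoint x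
    _ = ∏ ψ, cosh ‖d ψ‖ :=
      AddDissociated.randomisation _ _ <| hd.subset fun ψ hψ ↦ right_ne_zero_of_mul hψ
    _ ≤ ∏ ψ, exp (‖d ψ‖ ^ 2 / 2) := by
      gcongr with ψ
      exact cosh_le_exp_half_sq _
    _ = exp ((∑ ψ, ‖d ψ‖ ^ 2) / 2) := by rw [← exp_sum, sum_div]

lemma AddDissociated.expect_norm_pow_le_of_pos {d : AddChar G ℂ → ℂ}
    (hd : AddDissociated {ψ | d ψ ≠ 0}) (p : ℕ) {c : ℝ} (hc : 0 < c) :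
    𝔼 x, ‖∑ ψ, d ψ * ψ x‖ ^ p ≤
      4 * (√2 * p / (c * exp 1)) ^ p * exp (c ^ 2 * (∑ ψ, ‖d ψ‖ ^ 2) / 2) := by
  have hdir (k : ℕ) : 𝔼 x, exp (c * (Complex.I ^ k * ∑ ψ, d ψ * ψ x).re) ≤
      exp (c ^ 2 * (∑ ψ, ‖d ψ‖ ^ 2) / 2) := by
    have hsub : {ψ | (c * Complex.I ^ k * d ψ : ℂ) ≠ 0} ⊆ {ψ | d ψ ≠ 0} :=
      fun ψ hψ ↦ right_ne_zero_of_mul hψ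
    convert (hd.subset hsub).expect_exp_re_sum_le using 3 with x
    · rw [← Complex.re_ofReal_mul, mul_sum, mul_sum]
      congr! 2 with ψ
      ring
    · simp [mul_sum, mul_pow, norm_pow]
  calc 𝔼 x, ‖∑ ψ, d ψ * ψ x‖ ^ p
      ≤ 𝔼 x, (√2 * p / (c * exp 1)) ^ p *
          ∑ k ∈ range 4, exp (c * (Complex.I ^ k * ∑ ψ, d ψ * ψ x).re) :=
        expect_le_expect fun x _ ↦ Complex.norm_pow_le_sum_exp_re _ hc p
    _ = (√2 * p / (c * exp 1)) ^ p *
          ∑ k ∈ range 4, 𝔼 x, exp (c * (Complex.I ^ k * ∑ ψ, d ψ * ψ x).re) := by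
        rw [← mul_expect, expect_sum_comm]
    _ ≤ (√2 * p / (c * exp 1)) ^ p * ∑ k ∈ range 4, exp (c ^ 2 * (∑ ψ, ‖d ψ‖ ^ 2) / 2) := by
        gcongr with k
        exact hdir k
    _ = 4 * (√2 * p / (c * exp 1)) ^ p * exp (c ^ 2 * (∑ ψ, ‖d ψ‖ ^ 2) / 2) := by
        rw [sum_const, card_range, nsmul_eq_mul]
        push_cast
        ring

lemma AddDissociated.expect_norm_pow_le {d : AddChar G ℂ → ℂ}
    (hd : AddDissociated {ψ | d ψ ≠ 0}) {p : ℕ} (hp : p ≠ 0) :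
    𝔼 x, ‖∑ ψ, d ψ * ψ x‖ ^ p ≤ (4 * √p) ^ p * (∑ ψ, ‖d ψ‖ ^ 2) ^ (p / 2 : ℝ) := by
  rcases (sum_nonneg fun ψ _ ↦ sq_nonneg ‖d ψ‖ : 0 ≤ ∑ ψ, ‖d ψ‖ ^ 2).eq_or_lt with hV | hV
  · have hd0 (ψ : AddChar G ℂ) : d ψ = 0 := by
      simpa using (sum_eq_zero_iff_of_nonneg fun ψ _ ↦ sq_nonneg ‖d ψ‖).1 hV.symm ψ (mem_univ ψ)
    simp only [hd0, zero_mul, sum_const_zero, norm_zero, zero_pow hp, expect_const_zero]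
    positivity
  set V := ∑ ψ, ‖d ψ‖ ^ 2
  have hp' : (0 : ℝ) < p := by positivity
  set c := √p / √V
  have hc : 0 < c := by positivity
  have hVp : V ^ (p / 2 : ℝ) = √V ^ p := by
    rw [sqrt_eq_rpow, ← rpow_natCast, ← rpow_mul hV.le]; ring_nf
  have hcV : c ^ 2 * V / 2 = p * (1 / 2) := by
    rw [div_pow, sq_sqrt hp'.le, sq_sqrt hV.le]; field_simp
  have hbase : √2 * p / (c * exp 1) = √2 * √p * √V / exp 1 := by
    conv_lhs => rw [← mul_self_sqrt hp'.le]
    field_simp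
    exact (div_mul_cancel₀ _ (sqrt_pos.2 hV).ne').symm
  calc 𝔼 x, ‖∑ ψ, d ψ * ψ x‖ ^ p
      ≤ 4 * (√2 * p / (c * exp 1)) ^ p * exp (c ^ 2 * V / 2) :=
        hd.expect_norm_pow_le_of_pos p hc
    _ = 4 * (√2 * exp (1 / 2) / exp 1) ^ p * (√p * √V) ^ p := by
        rw [hcV, exp_nat_mul, hbase]; ring
    _ ≤ 4 ^ p * 1 * (√p * √V) ^ p := by
        gcongr
        · exact le_self_pow₀ (by norm_num) hp
        · exact pow_le_one₀ (by positivity)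
            ((div_le_one (exp_pos 1)).2 sqrt_two_mul_exp_half_le_exp_one)
    _ = (4 * √p) ^ p * V ^ (p / 2 : ℝ) := by rw [hVp]; ring

lemma AddChar.exists_addEquiv_of_injective (e : AddChar G (AddChar G ℂ))
    (he : Function.Injective e) : ∃ E : G ≃+ AddChar G ℂ, ∀ ξ, E ξ = e ξ := by
  let f : G →+ AddChar G ℂ := ⟨⟨e, e.map_zero_eq_one⟩, e.map_add_eq_mul⟩
  have hf : Function.Bijective f :=
    (Fintype.bijective_iff_injective_and_card f).2 ⟨he, AddChar.card_eq.symm⟩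
  exact ⟨.ofBijective f hf, fun _ ↦ rfl⟩

end

/-- **Rudin's inequality.** For any finite abelian group `G` (with its dual realized inside `G`
via a perfect character pairing `e`), any dissociated set `Λ ⊆ G`, any complex coefficients
`a`, and any integer `p ≥ 2`,
`(1/|G|) ∑_x |∑_{ξ∈Λ} a_ξ e^{2πi ξ·x}|^p ≤ (C√p)^p (∑_{ξ∈Λ} |a_ξ|²)^{p/2}`. -/
theorem rudin_inequality :
    ∃ C : ℝ, 0 < C ∧
      ∀ (G : Type) [AddCommGroup G] [Fintype G]
        (e : AddChar G (AddChar G ℂ)) (_ : Function.Injective e)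
        (Λ : Finset G) (_ : AddDissociated (Λ : Set G))
        (a : G → ℂ) (p : ℕ) (_ : 2 ≤ p),
        (Fintype.card G : ℝ)⁻¹ *
            ∑ x : G, ‖∑ ξ ∈ Λ, a ξ * e ξ x‖ ^ p ≤
          (C * Real.sqrt p) ^ p * (∑ ξ ∈ Λ, ‖a ξ‖ ^ 2) ^ ((p : ℝ) / 2) := by
  refine ⟨4, by norm_num, fun G _ _ e he Λ hΛ a p hp ↦ ?_⟩
  classical
  obtain ⟨E, hE⟩ := e.exists_addEquiv_of_injective he
  set d : AddChar G ℂ → ℂ := fun ψ ↦ if E.symm ψ ∈ Λ then a (E.symm ψ) else 0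
  have hf (x : G) : ∑ ξ ∈ Λ, a ξ * e ξ x = ∑ ψ, d ψ * ψ x := by
    rw [← E.toEquiv.sum_comp]; simp [d, ← hE]
  have hV : ∑ ξ ∈ Λ, ‖a ξ‖ ^ 2 = ∑ ψ, ‖d ψ‖ ^ 2 := by
    rw [← E.toEquiv.sum_comp]; simp [d, apply_ite]
  have hd : AddDissociated {ψ | d ψ ≠ 0} :=
    ((E.symm.addDissociated_preimage).2 hΛ).subset fun ψ hψ ↦ by by_contra h; simp_all [d]
  rw [← div_eq_inv_mul, ← Fintype.expect_eq_sum_div_card]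
  simpa only [hf, hV] using hd.expect_norm_pow_le (by omega : p ≠ 0)
end

section
/- Let G be a finite abelian group, δ ∈ (0,1], l ≥ 2 an integer, Λ ⊆ Ĝ dissociated, and S ⊆ G with |S| = δ|G|. Then ∑_{ξ∈Λ} |Ŝ(ξ)|^{l+1} ≤ C₂ |S| (∑_{ξ≠0} |Ŝ(ξ)|^{2l})^{1/2} · log^{1/2}(1/δ) for an absolute constant C₂ > 0. -/
/-!
Chang's argument. For a dissociated set of characters, Rudin's inequality
`𝔼 exp (Re ∑_{ψ ∈ Λ} d ψ · ψ) ≤ exp (∑ ‖d ψ‖² / 2)` follows by bounding each exponential by its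
chord and averaging the resulting product exactly. Testing it against `d ψ = conj (Ŝ ψ) / |S|`
and applying Jensen's inequality on `S` gives the energy bound
`∑_{ξ ∈ Λ} |Ŝ ξ|² ≤ 2 |S|² log (1 / δ)`. Cauchy–Schwarz on `|Ŝ|^{l+1} = |Ŝ| · |Ŝ|^l` concludes,
as `0 ∉ Λ`.
-/

open Finset Real
open scoped BigOperators ComplexConjugate

lemma Real.exp_le_cosh_add_sinh_div_mul_s2 {R t : ℝ} (h : |t| ≤ R) :
    exp t ≤ cosh R + sinh R / R * t := by
  obtain rfl | hR := ((abs_nonneg t).trans h).eq_or_lt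
  · simp [abs_nonpos_iff.1 h]
  obtain ⟨hRt, htR⟩ := abs_le.1 h
  have ha : 0 ≤ (R - t) / (2 * R) := div_nonneg (by linarith) (by positivity)
  have hb : 0 ≤ (R + t) / (2 * R) := div_nonneg (by linarith) (by positivity)
  have chord := convexOn_exp.2 (Set.mem_univ (-R)) (Set.mem_univ R) ha hb (by field_simp; ring)
  have hpoint : (R - t) / (2 * R) * -R + (R + t) / (2 * R) * R = t := by field_simp; ring
  simp only [smul_eq_mul, hpoint] at chord
  refine chord.trans_eq ?_
  rw [cosh_eq, sinh_eq]
  field_simp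
  ring

lemma Real.exp_expect_le_expect_exp {ι : Type*} {s : Finset ι} (hs : s.Nonempty) (f : ι → ℝ) :
    exp (𝔼 i ∈ s, f i) ≤ 𝔼 i ∈ s, exp (f i) := by
  have hw : ∑ _i ∈ s, (#s : ℝ)⁻¹ = 1 := by
    rw [sum_const, nsmul_eq_mul, mul_inv_cancel₀ (by positivity)]
  simpa only [expect_eq_sum_div_card, smul_eq_mul, inv_mul_eq_div, ← sum_div] using
    convexOn_exp.map_sum_le (fun _ _ => by positivity) hw (fun i _ => Set.mem_univ (f i))

@[to_additive]
lemma MulDissociated.image {α β F : Type*} [CommGroup α] [CommGroup β] [FunLike F α β]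
    [MonoidHomClass F α β] {s : Set α} {f : F} (hf : Function.Injective f)
    (hs : MulDissociated s) : MulDissociated (f '' s) := by
  classical
  intro t' ht' u' hu' htu
  obtain ⟨t, ht, rfl⟩ := subset_set_image_iff.1 ht'
  obtain ⟨u, hu, rfl⟩ := subset_set_image_iff.1 hu'
  beta_reduce at htu
  rw [prod_image hf.injOn, prod_image hf.injOn, ← map_prod, ← map_prod] at htu
  rw [hs ht hu (hf htu)]

section Chang

variable {G : Type*} [AddCommGroup G] [Fintype G]

/-- Rudin's inequality in exponential form. -/
lemma AddDissociated.expect_exp_sum_re_le {d : AddChar G ℂ → ℂ}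
    (hd : AddDissociated {ψ | d ψ ≠ 0}) :
    𝔼 a, exp (∑ ψ, (d ψ * ψ a).re) ≤ exp (∑ ψ, ‖d ψ‖ ^ 2 / 2) := by
  set d' : AddChar G ℂ → ℂ := fun ψ ↦ (sinh ‖d ψ‖ / ‖d ψ‖ : ℝ) * d ψ
  have hd' : AddDissociated {ψ | d' ψ ≠ 0} :=
    hd.subset fun ψ (hψ : d' ψ ≠ 0) (h0 : d ψ = 0) ↦ hψ (by simp [d', h0])
  -- The chord of `exp` on `[-‖d ψ‖, ‖d ψ‖]` is affine in `ψ a`, so randomisation averages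
  -- the product of chords exactly.
  have chord (a : G) (ψ : AddChar G ℂ) :
      exp (d ψ * ψ a).re ≤ cosh ‖d ψ‖ + (d' ψ * ψ a).re := by
    have hre : |(d ψ * ψ a).re| ≤ ‖d ψ‖ := by
      simpa [AddChar.norm_apply] using Complex.abs_re_le_norm (d ψ * ψ a)
    rw [mul_assoc, Complex.re_ofReal_mul]
    exact exp_le_cosh_add_sinh_div_mul_s2 hre
  calc 𝔼 a, exp (∑ ψ, (d ψ * ψ a).re)
      ≤ 𝔼 a, ∏ ψ, (cosh ‖d ψ‖ + (d' ψ * ψ a).re) := by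
        simp_rw [exp_sum]
        exact expect_le_expect fun a _ ↦
          prod_le_prod (fun ψ _ ↦ (exp_pos _).le) fun ψ _ ↦ chord a ψ
    _ = ∏ ψ, cosh ‖d ψ‖ := hd'.randomisation _ _
    _ ≤ ∏ ψ, exp (‖d ψ‖ ^ 2 / 2) :=
        prod_le_prod (fun ψ _ ↦ (cosh_pos _).le) fun ψ _ ↦ cosh_le_exp_half_sq _
    _ = exp (∑ ψ, ‖d ψ‖ ^ 2 / 2) := (exp_sum _ _).symm

/-- Chang's lemma. -/
lemma AddDissociated.sum_norm_sum_sq_le {Λ : Finset (AddChar G ℂ)}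
    (hΛ : AddDissociated (Λ : Set (AddChar G ℂ))) {S : Finset G} (hS : S.Nonempty) :
    ∑ ψ ∈ Λ, ‖∑ x ∈ S, ψ x‖ ^ 2 ≤ 2 * #S ^ 2 * log (Fintype.card G / #S) := by
  set n : ℝ := (#S : ℝ)
  set T := ∑ ψ ∈ Λ, ‖∑ x ∈ S, ψ x‖ ^ 2
  have hn : 0 < n := by positivity
  set d : AddChar G ℂ → ℂ := fun ψ ↦ if ψ ∈ Λ then conj (∑ x ∈ S, ψ x) / n else 0
  have hd : AddDissociated {ψ | d ψ ≠ 0} :=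
    hΛ.subset fun ψ hψ ↦ by_contra fun h ↦ hψ (if_neg h)
  have hcorr : ∑ ψ, d ψ * ∑ x ∈ S, ψ x = (T / n : ℝ) := by
    simp only [d, ite_mul, zero_mul, sum_ite_mem, univ_inter, div_mul_eq_mul_div,
      Complex.conj_mul', T, sum_div]
    push_cast
    rfl
  have hmean : 𝔼 x ∈ S, ∑ ψ, (d ψ * ψ x).re = T / n ^ 2 := by
    rw [expect_eq_sum_div_card, sum_comm]
    simp_rw [← Complex.re_sum, ← mul_sum, hcorr, Complex.ofReal_re]
    rw [div_div, ← sq]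
  have hnorm : ∑ ψ, ‖d ψ‖ ^ 2 / 2 = T / (2 * n ^ 2) := by
    simp only [d, apply_ite norm, norm_div, norm_zero, Complex.norm_conj, Complex.norm_real,
      norm_of_nonneg hn.le, ite_pow, ite_div, ne_eq, OfNat.ofNat_ne_zero, not_false_eq_true,
      zero_pow, zero_div, sum_ite_mem, univ_inter, div_pow, ← sum_div, T]
    rw [div_div, mul_comm]
  have hexp : exp (T / n ^ 2) ≤ Fintype.card G / n * exp (T / (2 * n ^ 2)) :=
    calc exp (T / n ^ 2) = exp (𝔼 x ∈ S, ∑ ψ, (d ψ * ψ x).re) := by rw [hmean]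
      _ ≤ 𝔼 x ∈ S, exp (∑ ψ, (d ψ * ψ x).re) := exp_expect_le_expect_exp hS _
      _ = (∑ x ∈ S, exp (∑ ψ, (d ψ * ψ x).re)) / n := expect_eq_sum_div_card _ _
      _ ≤ (∑ a, exp (∑ ψ, (d ψ * ψ a).re)) / n := by
        gcongr
        exact subset_univ S
      _ = Fintype.card G / n * 𝔼 a, exp (∑ ψ, (d ψ * ψ a).re) := by
        rw [expect_eq_sum_div_card, card_univ]
        field_simp
      _ ≤ Fintype.card G / n * exp (T / (2 * n ^ 2)) := by
        rw [← hnorm]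
        gcongr
        exact hd.expect_exp_sum_re_le
  have hhalf : exp (T / (2 * n ^ 2)) ≤ Fintype.card G / n := by
    rw [show T / n ^ 2 = T / (2 * n ^ 2) + T / (2 * n ^ 2) by ring, exp_add] at hexp
    exact le_of_mul_le_mul_right hexp (exp_pos _)
  have hlog : T / (2 * n ^ 2) ≤ log (Fintype.card G / n) :=
    (le_log_iff_exp_le (by positivity)).2 hhalf
  rw [div_le_iff₀ (by positivity)] at hlog
  linarith

end Chang

lemma Real.log_le_logb_two {x : ℝ} (hx : 1 ≤ x) : log x ≤ logb 2 x :=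
  le_div_self (log_nonneg hx) (log_pos one_lt_two)
    ((log_le_sub_one_of_pos two_pos).trans (by norm_num))

/-- Generalization of Chang's theorem: if `Λ` is dissociated, `|S| = δ|G|` and `l ≥ 2`, then
`∑_{ξ∈Λ} |Ŝ(ξ)|^{l+1} ≤ C₂ |S| (∑_{ξ≠0} |Ŝ(ξ)|^{2l})^{1/2} log^{1/2}(1/δ)` (log base 2). -/
theorem chang_generalization :
    ∃ C₂ : ℝ, 0 < C₂ ∧
      ∀ (G : Type) [AddCommGroup G] [Fintype G] [DecidableEq G]
        (e : AddChar G (AddChar G ℂ)) (_ : Function.Injective e)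
        (δ : ℝ) (_ : 0 < δ) (_ : δ ≤ 1)
        (l : ℕ) (_ : 2 ≤ l)
        (Λ : Finset G) (_ : AddDissociated (Λ : Set G))
        (S : Finset G) (_ : (S.card : ℝ) = δ * Fintype.card G),
        ∑ ξ ∈ Λ, ‖∑ x ∈ S, e (-ξ) x‖ ^ (l + 1) ≤
          C₂ * (S.card : ℝ) *
            Real.sqrt (∑ ξ ∈ Finset.univ.filter (fun ξ : G => ξ ≠ 0),
                ‖∑ x ∈ S, e (-ξ) x‖ ^ (2 * l)) *
            Real.sqrt (Real.logb 2 (1 / δ)) := by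
  refine ⟨√2, by positivity, fun G _ _ _ e he δ hδ0 hδ1 l _ Λ hΛ S hS ↦ ?_⟩
  let f : G →+ AddChar G ℂ :=
    AddMonoidHom.mk' (fun ξ ↦ e (-ξ)) fun a b ↦ by rw [neg_add, e.map_add_eq_mul]; rfl
  have hf : Function.Injective f := fun a b h ↦ neg_injective (he h)
  set A : G → ℝ := fun ξ ↦ ‖∑ x ∈ S, e (-ξ) x‖
  have hS₀ : S.Nonempty := by
    rw [← card_pos, ← Nat.cast_pos (α := ℝ), hS]
    positivity
  have henergy : ∑ ξ ∈ Λ, A ξ ^ 2 ≤ 2 * #S ^ 2 * logb 2 (1 / δ) := by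
    have hdiss : AddDissociated (Λ.image f : Set (AddChar G ℂ)) := by
      rw [coe_image]
      exact hΛ.image hf
    have hchang := hdiss.sum_norm_sum_sq_le hS₀
    have hratio : (Fintype.card G : ℝ) / #S = 1 / δ := by
      rw [hS]
      field_simp
    rw [sum_image hf.injOn, hratio] at hchang
    exact hchang.trans (by gcongr; exact log_le_logb_two (one_le_one_div hδ0 hδ1))
  have hsupport : Λ ⊆ univ.filter (· ≠ 0) := fun ξ hξ ↦
    mem_filter.2 ⟨mem_univ ξ, addDissociated_singleton.1 (hΛ.subset (by simpa using hξ))⟩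
  calc ∑ ξ ∈ Λ, A ξ ^ (l + 1) = ∑ ξ ∈ Λ, A ξ * A ξ ^ l := by simp only [pow_succ']
    _ ≤ √(∑ ξ ∈ Λ, A ξ ^ 2) * √(∑ ξ ∈ Λ, (A ξ ^ l) ^ 2) := sum_mul_le_sqrt_mul_sqrt _ _ _
    _ ≤ √(2 * #S ^ 2 * logb 2 (1 / δ)) * √(∑ ξ ∈ univ.filter (· ≠ 0), A ξ ^ (2 * l)) := by
      simp only [← pow_mul, mul_comm l]
      gcongr
    _ = √2 * #S * √(∑ ξ ∈ univ.filter (· ≠ 0), A ξ ^ (2 * l)) * √(logb 2 (1 / δ)) := by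
      rw [sqrt_mul (by positivity), sqrt_mul zero_le_two, sqrt_sq (Nat.cast_nonneg _)]
      ring
end

section
/- Let G be a finite abelian group of order N, l ≥ 2 an integer, Λ ⊆ G dissociated, and S₁,…,S_l ⊆ G arbitrary sets. Then ∑_{x∈Λ} (S₁ * S₂ * … * S_l)²(x) ≤ C₃ (|S_l|/N) (∑_ξ ∏_{j=1}^{l-1} |Ŝ_j(ξ)|²) · log N for an absolute constant C₃ > 0. -/
open Finset Function

/-!
Fourier inversion writes `N · (S₁ * ⋯ * S_l)(x)` as `∑_ξ ∏_j Ŝ_j(ξ) e_ξ(x)`. Splitting off the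
factor `Ŝ_l`, the triangle inequality, Cauchy–Schwarz and Parseval `∑_ξ |Ŝ_l(ξ)|² = N |S_l|` give
`(S₁ * ⋯ * S_l)(x)² ≤ (|S_l|/N) ∑_ξ ∏_{j<l} |Ŝ_j(ξ)|²` at every single point `x`. A dissociated
set `Λ` has `2^|Λ|` distinct subset sums, so `|Λ| ≤ log N`, and summing over `Λ` gives the
theorem with `C₃ = 1`.
-/

namespace AddChar

lemma map_sum_eq_prod {G M ι : Type*} [AddCommMonoid G] [CommMonoid M] (ψ : AddChar G M)
    (s : Finset ι) (f : ι → G) : ψ (∑ i ∈ s, f i) = ∏ i ∈ s, ψ (f i) := by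
  classical
  induction s using Finset.induction_on with
  | empty => simp
  | insert a s ha ih => rw [sum_insert ha, prod_insert ha, map_add_eq_mul, ih]

lemma apply_neg_eq_apply_neg {G : Type*} [AddCommGroup G] (e : AddChar G (AddChar G ℂ))
    (ξ x : G) : e (-ξ) x = e ξ (-x) := by
  rw [map_neg_eq_inv, inv_apply]

end AddChar

lemma AddDissociated.two_pow_card_le {G : Type*} [AddCommGroup G] [Fintype G] {s : Finset G}
    (hs : AddDissociated (s : Set G)) : 2 ^ #s ≤ Fintype.card G := by
  rw [← card_powerset, ← card_univ]
  refine card_le_card_of_injOn (∑ x ∈ ·, x) (fun _ _ ↦ mem_univ _) fun t ht u hu htu ↦ ?_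
  exact hs (by simpa using ht) (by simpa using hu) htu

lemma AddDissociated.card_le_logb {G : Type*} [AddCommGroup G] [Fintype G] {s : Finset G}
    (hs : AddDissociated (s : Set G)) : (#s : ℝ) ≤ Real.logb 2 (Fintype.card G) := by
  rw [Real.le_logb_iff_rpow_le one_lt_two (by exact_mod_cast Fintype.card_pos),
    Real.rpow_natCast]
  exact_mod_cast hs.two_pow_card_le

variable {G : Type*} [AddCommGroup G] [Fintype G] [DecidableEq G]

/-- The iterated convolution `(S₁ * ⋯ * S_l)(x)` of indicator functions. -/
def convCount {ι : Type*} [Fintype ι] [DecidableEq ι] (S : ι → Finset G) (x : G) : ℕ :=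
  #{y ∈ Fintype.piFinset S | ∑ j, y j = x}

lemma prod_sum_eq_sum_convCount_mul {ι R : Type*} [Fintype ι] [DecidableEq ι] [CommSemiring R]
    (S : ι → Finset G) (ψ : AddChar G R) :
    ∏ j, ∑ x ∈ S j, ψ x = ∑ x, (convCount S x : R) * ψ x := by
  have hfiber (x : G) : (convCount S x : R) * ψ x =
      ∑ y ∈ Fintype.piFinset S with ∑ j, y j = x, ψ (∑ j, y j) := by
    rw [sum_congr rfl fun y hy ↦ by rw [(mem_filter.1 hy).2], sum_const, nsmul_eq_mul,
      convCount]
  rw [prod_univ_sum, sum_congr rfl fun x _ ↦ hfiber x, sum_fiberwise]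
  exact sum_congr rfl fun y _ ↦ (ψ.map_sum_eq_prod _ _).symm

section Duality

variable {e : AddChar G (AddChar G ℂ)}

lemma sum_apply_eq_ite_of_injective (he : Injective e) (x : G) :
    ∑ ξ, e ξ x = if x = 0 then (Fintype.card G : ℂ) else 0 := by
  have hbij : Bijective e :=
    (Fintype.bijective_iff_injective_and_card e).2 ⟨he, AddChar.card_eq.symm⟩
  rw [← AddChar.sum_apply_eq_ite x]
  exact Fintype.sum_bijective e hbij _ _ fun _ ↦ rfl

lemma sum_sum_mul_apply_eq (he : Injective e) (f : G → ℂ) (x : G) :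
    ∑ ξ, (∑ y, f y * e (-ξ) y) * e ξ x = Fintype.card G * f x := by
  have hcombine (ξ y : G) : f y * e (-ξ) y * e ξ x = f y * e ξ (x - y) := by
    rw [mul_assoc, AddChar.apply_neg_eq_apply_neg, ← AddChar.map_add_eq_mul, neg_add_eq_sub]
  simp_rw [sum_mul, hcombine]
  rw [sum_comm]
  simp_rw [← mul_sum, sum_apply_eq_ite_of_injective he, sub_eq_zero, mul_ite, mul_zero]
  rw [sum_ite_eq, if_pos (mem_univ _), mul_comm]

lemma sum_norm_sq_sum_apply_neg (he : Injective e) (T : Finset G) :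
    ∑ ξ, ‖∑ x ∈ T, e (-ξ) x‖ ^ 2 = Fintype.card G * #T := by
  have hexpand (ξ : G) : ((‖∑ x ∈ T, e (-ξ) x‖ ^ 2 : ℝ) : ℂ) =
      ∑ a ∈ T, ∑ b ∈ T, e ξ (b - a) := by
    rw [Complex.ofReal_pow, ← Complex.mul_conj', map_sum, sum_mul_sum]
    refine sum_congr rfl fun a _ ↦ sum_congr rfl fun b _ ↦ ?_
    rw [← AddChar.map_neg_eq_conj, ← AddChar.map_add_eq_mul, AddChar.apply_neg_eq_apply_neg]
    congr 1
    abel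
  apply Complex.ofReal_injective
  rw [Complex.ofReal_sum, sum_congr rfl fun ξ _ ↦ hexpand ξ, sum_comm]
  simp_rw [sum_comm (s := (univ : Finset G)), sum_apply_eq_ite_of_injective he, sub_eq_zero]
  simp [mul_comm]

variable {ι : Type*} [Fintype ι] [DecidableEq ι]

lemma card_mul_convCount_le (he : Injective e) (S : ι → Finset G) (k : ι) (x : G) :
    Fintype.card G * (convCount S x : ℝ) ≤
      ∑ ξ, (∏ j ∈ univ.erase k, ‖∑ y ∈ S j, e (-ξ) y‖) * ‖∑ y ∈ S k, e (-ξ) y‖ := calc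
  _ = ‖(Fintype.card G : ℂ) * convCount S x‖ := by norm_cast
  _ = ‖∑ ξ, (∏ j, ∑ y ∈ S j, e (-ξ) y) * e ξ x‖ := by
    rw [← sum_sum_mul_apply_eq he (fun y ↦ (convCount S y : ℂ)) x]
    simp_rw [prod_sum_eq_sum_convCount_mul]
  _ ≤ ∑ ξ, ‖(∏ j, ∑ y ∈ S j, e (-ξ) y) * e ξ x‖ := norm_sum_le _ _
  _ = _ := by simp_rw [norm_mul, AddChar.norm_apply, mul_one, norm_prod,
    prod_erase_mul _ _ (mem_univ k)]

lemma convCount_sq_le (he : Injective e) (S : ι → Finset G) (k : ι) (x : G) :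
    (convCount S x : ℝ) ^ 2 ≤
      #(S k) / Fintype.card G * ∑ ξ, ∏ j ∈ univ.erase k, ‖∑ y ∈ S j, e (-ξ) y‖ ^ 2 := by
  have hN : (0 : ℝ) < Fintype.card G := by exact_mod_cast Fintype.card_pos
  have hCS : (Fintype.card G * (convCount S x : ℝ)) ^ 2 ≤
      (∑ ξ, ∏ j ∈ univ.erase k, ‖∑ y ∈ S j, e (-ξ) y‖ ^ 2) * (Fintype.card G * #(S k)) := calc
    _ ≤ (∑ ξ, (∏ j ∈ univ.erase k, ‖∑ y ∈ S j, e (-ξ) y‖) * ‖∑ y ∈ S k, e (-ξ) y‖) ^ 2 :=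
      pow_le_pow_left₀ (by positivity) (card_mul_convCount_le he S k x) 2
    _ ≤ (∑ ξ, (∏ j ∈ univ.erase k, ‖∑ y ∈ S j, e (-ξ) y‖) ^ 2) *
          ∑ ξ, ‖∑ y ∈ S k, e (-ξ) y‖ ^ 2 := sum_mul_sq_le_sq_mul_sq _ _ _
    _ = _ := by simp_rw [prod_pow, sum_norm_sq_sum_apply_neg he]
  rw [div_mul_eq_mul_div, le_div_iff₀ hN]
  refine le_of_mul_le_mul_left ?_ hN
  nlinarith

end Duality

/-- Theorem 1.4: for a dissociated `Λ ⊆ G` and arbitrary sets `S₁, …, S_l` (`l ≥ 2`),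
`∑_{x∈Λ} (S₁*…*S_l)²(x) ≤ C₃ (|S_l|/N)(∑_ξ ∏_{j=1}^{l-1} |Ŝ_j(ξ)|²) log N` (log base 2),
where `(S₁*…*S_l)(x)` counts tuples `(y₁,…,y_l) ∈ S₁×…×S_l` with `∑ y_j = x`. -/
theorem dual_chang :
    ∃ C₃ : ℝ, 0 < C₃ ∧
      ∀ (G : Type) [AddCommGroup G] [Fintype G] [DecidableEq G]
        (e : AddChar G (AddChar G ℂ)) (_ : Function.Injective e)
        (l : ℕ) (_ : 2 ≤ l)
        (Λ : Finset G) (_ : AddDissociated (Λ : Set G))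
        (S : Fin l → Finset G),
        ∑ x ∈ Λ,
            ((Finset.univ.filter
              (fun y : Fin l → G => (∀ j, y j ∈ S j) ∧ ∑ j, y j = x)).card : ℝ) ^ 2 ≤
          C₃ * (((S ⟨l - 1, by omega⟩).card : ℝ) / Fintype.card G) *
            (∑ ξ : G, ∏ j ∈ Finset.univ.filter (fun j : Fin l => (j : ℕ) < l - 1),
                ‖∑ x ∈ S j, e (-ξ) x‖ ^ 2) *
            Real.logb 2 (Fintype.card G) := by
  refine ⟨1, one_pos, fun G _ _ _ e he l hl Λ hΛ S ↦ ?_⟩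
  set k : Fin l := ⟨l - 1, by omega⟩
  have herase : univ.filter (fun j : Fin l ↦ (j : ℕ) < l - 1) = univ.erase k := by
    ext j
    simp only [mem_filter, mem_univ, true_and, mem_erase, ne_eq, Fin.ext_iff, and_true, k]
    omega
  have hcount (x : G) :
      #{y : Fin l → G | (∀ j, y j ∈ S j) ∧ ∑ j, y j = x} = convCount S x := by
    unfold convCount
    congr 1
    ext y
    simp [Fintype.mem_piFinset]
  set M := #(S k) / (Fintype.card G : ℝ) *
    ∑ ξ, ∏ j ∈ univ.erase k, ‖∑ y ∈ S j, e (-ξ) y‖ ^ 2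
  calc _ ≤ ∑ _x ∈ Λ, M := sum_le_sum fun x _ ↦ hcount x ▸ convCount_sq_le he S k x
    _ = #Λ * M := by rw [sum_const, nsmul_eq_mul]
    _ ≤ Real.logb 2 (Fintype.card G) * M := by gcongr; exact hΛ.card_le_logb
    _ = _ := by rw [herase]; ring
end

section
/- Let p be prime and f : ℤ/pℤ → ℂ a nonzero function. Then |supp f| + |supp f̂| ≥ p + 1, where f̂(ξ) = ∑_{x} f(x)e^{-2πi ξx/p}. -/
/-!
If `|supp f| + |supp f̂| ≤ p`, then the restriction of `f` to its support `A` lies in the kernel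
of a square minor `(ω ^ (ξ x))` of the DFT matrix, with rows indexed by `|A|` frequencies at
which `f̂` vanishes. So it suffices that all such minors are nonsingular (Chebotarëv).

For that, work in `ℤ[ζ] = ℤ[X]/(Φ_p)`, which embeds in `ℂ`. A nonzero kernel vector over `ℤ[ζ]`
can be divided by `ζ - 1` until some entry `d_k` is no longer divisible by `ζ - 1`. Then
`P = ∑ d_j X^{ξ_j}` has `n` terms and vanishes at the `n` distinct points `ζ^{x_i}`. Reducing
modulo `ζ - 1` (`ℤ[ζ]/(ζ - 1) = 𝔽_p`) gives a nonzero polynomial over `𝔽_p` of degree `< p` with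
at most `n` terms that is divisible by `(X - 1)^n`. This is impossible: the operator
`X d/dX - deg P` removes exactly one term and lowers the order of vanishing at `1` by at most one.
-/

open Polynomial Function Matrix

namespace Polynomial

variable {R ι : Type*}

theorem coeff_X_mul_derivative_sub_C_mul [CommRing R] (P : R[X]) (c : R) (k : ℕ) :
    (X * derivative P - C c * P).coeff k = (k - c) * P.coeff k := by
  cases k with
  | zero => simp
  | succ k =>
    rw [coeff_sub, coeff_X_mul, coeff_derivative, coeff_C_mul]
    push_cast
    ring

section CharP

variable [CommRing R] [IsDomain R] {p : ℕ} [CharP R p]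

theorem support_X_mul_derivative_sub_natDegree_mul {P : R[X]} (hdeg : P.natDegree < p) :
    (X * derivative P - C (P.natDegree : R) * P).support = P.support.erase P.natDegree := by
  ext k
  simp only [mem_support_iff, Finset.mem_erase, coeff_X_mul_derivative_sub_C_mul,
    mul_ne_zero_iff, sub_ne_zero]
  refine and_congr_left fun hk => ?_
  have hkp : k < p := (le_natDegree_of_ne_zero hk).trans_lt hdeg
  rw [Ne, Ne, CharP.natCast_eq_natCast R p, Nat.ModEq, Nat.mod_eq_of_lt hkp,
    Nat.mod_eq_of_lt hdeg]

theorem lt_card_support_of_X_sub_one_pow_dvd {P : R[X]} (hP : P ≠ 0) (hdeg : P.natDegree < p)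
    {n : ℕ} (hdvd : (X - 1) ^ n ∣ P) : n < P.support.card := by
  induction n generalizing P with
  | zero => exact Finset.card_pos.mpr (support_nonempty.mpr hP)
  | succ n ih =>
    set Q := X * derivative P - C (P.natDegree : R) * P
    have hQ : Q.support = P.support.erase P.natDegree :=
      support_X_mul_derivative_sub_natDegree_mul hdeg
    have hcard : Q.support.card + 1 = P.support.card := by
      rw [hQ]
      exact Finset.card_erase_add_one (natDegree_mem_support_of_nonzero hP)
    have hQdvd : (X - 1) ^ n ∣ Q :=
      dvd_sub ((pow_sub_one_dvd_derivative_of_pow_dvd hdvd).mul_left X)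
        (((pow_dvd_pow _ n.le_succ).trans hdvd).mul_left _)
    by_cases hQ0 : Q = 0
    · obtain ⟨k, a, ha, rfl⟩ := card_support_eq_one.mp (by rw [← hcard, hQ0]; rfl)
      have hroot : (C a * X ^ k).IsRoot 1 := by
        rw [← dvd_iff_isRoot, C_1]
        exact (dvd_pow_self _ n.succ_ne_zero).trans hdvd
      simp [IsRoot, ha] at hroot
    · have hQdeg : Q.natDegree < p :=
        (le_natDegree_of_mem_supp _ ((hQ ▸ Finset.erase_subset _ _)
          (natDegree_mem_support_of_nonzero hQ0))).trans_lt hdeg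
      have := ih hQ0 hQdeg hQdvd
      omega

end CharP

section Sparse

variable [Semiring R] [Fintype ι] (ξ : ι → ℕ) (a : ι → R)

theorem coeff_sum_monomial_of_injective (hξ : Injective ξ) (k : ι) :
    (∑ j, monomial (ξ j) (a j)).coeff (ξ k) = a k := by
  rw [finsetSum_coeff, Finset.sum_eq_single k]
  · simp
  · intro j _ hjk
    rw [coeff_monomial, if_neg (hξ.ne hjk)]
  · simp

theorem support_sum_monomial_subset [DecidableEq ι] :
    (∑ j, monomial (ξ j) (a j)).support ⊆ Finset.univ.image ξ := by
  intro k hk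
  contrapose! hk
  rw [notMem_support_iff, finsetSum_coeff]
  refine Finset.sum_eq_zero fun j _ => ?_
  rw [coeff_monomial, if_neg]
  rintro rfl
  exact hk (Finset.mem_image_of_mem ξ (Finset.mem_univ j))

end Sparse

theorem prod_X_sub_C_dvd_of_injective [CommRing R] [IsDomain R] [Fintype ι] {P : R[X]}
    {r : ι → R} (hr : Injective r) (hroot : ∀ i, P.IsRoot (r i)) : ∏ i, (X - C (r i)) ∣ P := by
  rcases eq_or_ne P 0 with rfl | hP
  · exact dvd_zero _
  have hle : Finset.univ.val.map r ≤ P.roots := by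
    rw [Multiset.le_iff_subset (Finset.univ.nodup.map hr)]
    intro a ha
    obtain ⟨i, -, rfl⟩ := Multiset.mem_map.mp ha
    exact (mem_roots hP).mpr (hroot i)
  have := (Multiset.prod_X_sub_C_dvd_iff_le_roots hP _).mpr hle
  rwa [Multiset.map_map] at this

end Polynomial

theorem exists_eq_pow_smul_and_not_dvd {M ι : Type*} [CommMonoidWithZero M] [WfDvdMonoid M]
    {π : M} (hπ : ¬IsUnit π) (v : ι → M) {j : ι} (hj : v j ≠ 0) :
    ∃ (m : ℕ) (w : ι → M), v = π ^ m • w ∧ ∃ k, ¬π ∣ w k := by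
  obtain ⟨a, hvj⟩ : ∃ a, v j = a := ⟨_, rfl⟩
  induction a using (wellFounded_dvdNotUnit (α := M)).induction generalizing v with
  | _ a ih =>
  by_cases h : ∀ k, π ∣ v k
  · choose w hw using h
    have hwj : w j ≠ 0 := by
      rintro h0
      rw [hw j, h0, mul_zero] at hj
      exact hj rfl
    obtain ⟨m, u, rfl, hu⟩ :=
      ih (w j) ⟨hwj, π, hπ, by rw [← hvj, hw j]; exact mul_comm _ _⟩ w hwj rfl
    exact ⟨m + 1, u, funext fun k => by simp [hw k, pow_succ', mul_assoc], hu⟩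
  · push Not at h
    exact ⟨0, v, by simp, h⟩

section PowMulMatrix

variable {R K ι : Type*} [CommRing R] [IsDomain R] [Field K] {p : ℕ} [CharP K p] [Fintype ι]
  (ψ : R →+* K) {ζ : R} {x ξ : ι → ℕ}

theorem map_eq_zero_of_mulVec_pow_mul_eq_zero (hζ : ψ ζ = 1) (hx : Injective fun i => ζ ^ x i)
    (hξ : Injective ξ) (hξp : ∀ j, ξ j < p) {d : ι → R}
    (hd : (Matrix.of fun i j => ζ ^ (x i * ξ j)) *ᵥ d = 0) (j : ι) : ψ (d j) = 0 := by
  classical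
  by_contra hj
  set P : R[X] := ∑ j, monomial (ξ j) (d j)
  have hroot : ∀ i, P.IsRoot (ζ ^ x i) := fun i => by
    simpa [P, IsRoot, eval_finsetSum, mulVec, dotProduct, pow_mul, mul_comm] using congrFun hd i
  have hmap : P.map ψ = ∑ j, monomial (ξ j) (ψ (d j)) := by simp [P, Polynomial.map_sum]
  have hdvd : (X - 1) ^ Fintype.card ι ∣ P.map ψ := by
    simpa [Polynomial.map_prod, hζ] using map_dvd ψ (prod_X_sub_C_dvd_of_injective hx hroot)
  have hP0 : P.map ψ ≠ 0 := fun h => hj (by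
    rw [← coeff_sum_monomial_of_injective ξ (fun j => ψ (d j)) hξ j, ← hmap, h, coeff_zero])
  have hsupp := support_sum_monomial_subset ξ (fun j => ψ (d j))
  rw [← hmap] at hsupp
  have hdeg : (P.map ψ).natDegree < p := by
    obtain ⟨k, -, hk⟩ := Finset.mem_image.mp (hsupp (natDegree_mem_support_of_nonzero hP0))
    exact hk ▸ hξp k
  have hcard : (P.map ψ).support.card ≤ Fintype.card ι :=
    (Finset.card_le_card hsupp).trans Finset.card_image_le
  exact (lt_card_support_of_X_sub_one_pow_dvd hP0 hdeg hdvd).not_ge hcard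

theorem det_pow_mul_ne_zero_of_ker_le [WfDvdMonoid R] [DecidableEq ι] (hζ : ψ ζ = 1)
    (hker : RingHom.ker ψ ≤ Ideal.span {ζ - 1}) (hζ1 : ζ ≠ 1) (hx : Injective fun i => ζ ^ x i)
    (hξ : Injective ξ) (hξp : ∀ j, ξ j < p) : (Matrix.of fun i j => ζ ^ (x i * ξ j)).det ≠ 0 := by
  intro hdet
  obtain ⟨c, hc0, hc⟩ := exists_mulVec_eq_zero_iff.mpr hdet
  obtain ⟨j, hj⟩ := Function.ne_iff.mp hc0
  have hunit : ¬IsUnit (ζ - 1) := fun h => by simpa [hζ] using h.map ψ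
  obtain ⟨m, d, rfl, k, hk⟩ := exists_eq_pow_smul_and_not_dvd hunit c hj
  rw [mulVec_smul] at hc
  have hd := (smul_eq_zero.mp hc).resolve_left (pow_ne_zero _ (sub_ne_zero.mpr hζ1))
  exact hk (Ideal.mem_span_singleton.mp
    (hker (map_eq_zero_of_mulVec_pow_mul_eq_zero ψ hζ hx hξ hξp hd k)))

end PowMulMatrix

namespace AdjoinRoot

instance {n : ℕ} [NeZero n] : IsDomain (AdjoinRoot (cyclotomic n ℤ)) :=
  isDomain_of_prime (cyclotomic.irreducible (NeZero.pos n)).prime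

theorem injective_lift_cyclotomic {K : Type*} [Field K] [CharZero K] {n : ℕ} [NeZero n] {ω : K}
    (hω : IsPrimitiveRoot ω n) (h : (cyclotomic n ℤ).eval₂ (Int.castRingHom K) ω = 0) :
    Injective (lift (Int.castRingHom K) ω h) := by
  refine (injective_iff_map_eq_zero _).mpr fun r hr => ?_
  obtain ⟨g, rfl⟩ := mk_surjective r
  rw [lift_mk] at hr
  rw [mk_eq_zero, cyclotomic_eq_minpoly hω (NeZero.pos n)]
  exact minpoly.isIntegrallyClosed_dvd (hω.isIntegral (NeZero.pos n))
    (by rwa [aeval_def, algebraMap_int_eq])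

variable (p : ℕ) [Fact p.Prime]

noncomputable def cyclotomicToZMod : AdjoinRoot (cyclotomic p ℤ) →+* ZMod p :=
  lift (Int.castRingHom _) 1 (by simp [eval₂_at_one, eval_one_cyclotomic_prime])

theorem cyclotomicToZMod_root : cyclotomicToZMod p (root (cyclotomic p ℤ)) = 1 :=
  lift_root _

theorem ker_cyclotomicToZMod_le :
    RingHom.ker (cyclotomicToZMod p) ≤ Ideal.span {root (cyclotomic p ℤ) - 1} := by
  intro r hr
  rw [Ideal.mem_span_singleton]
  have hmod : ∀ g : ℤ[X], root (cyclotomic p ℤ) - 1 ∣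
      mk (cyclotomic p ℤ) g - ((g.eval 1 : ℤ) : AdjoinRoot (cyclotomic p ℤ)) := fun g => by
    simpa using map_dvd (mk (cyclotomic p ℤ)) (X_sub_C_dvd_sub_C_eval (a := 1) (p := g))
  obtain ⟨g, rfl⟩ := mk_surjective r
  rw [RingHom.mem_ker, cyclotomicToZMod, lift_mk, eval₂_at_one, eq_intCast,
    ZMod.intCast_zmod_eq_zero_iff_dvd] at hr
  obtain ⟨k, hk⟩ := hr
  -- `p = Φ_p(1) ≡ Φ_p(ζ) = 0` modulo `ζ - 1`
  have hp : root (cyclotomic p ℤ) - 1 ∣ (p : AdjoinRoot (cyclotomic p ℤ)) := by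
    simpa [eval_one_cyclotomic_prime] using hmod (cyclotomic p ℤ)
  have := (hmod g).add (hp.mul_right k)
  rwa [hk, Int.cast_mul, Int.cast_natCast, sub_add_cancel] at this

end AdjoinRoot

namespace IsPrimitiveRoot

open Finset

variable {K : Type*} [Field K] [CharZero K] {p : ℕ} [Fact p.Prime] {ω : K}

theorem det_pow_mul_ne_zero (hω : IsPrimitiveRoot ω p) {ι : Type*} [Fintype ι]
    [DecidableEq ι] {x ξ : ι → ℕ} (hx : Injective x) (hxp : ∀ i, x i < p) (hξ : Injective ξ)
    (hξp : ∀ j, ξ j < p) : (Matrix.of fun i j => ω ^ (x i * ξ j)).det ≠ 0 := by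
  have hroot : (cyclotomic p ℤ).eval₂ (Int.castRingHom K) ω = 0 := by
    rw [eval₂_eq_eval_map, map_cyclotomic_int]
    exact hω.isRoot_cyclotomic (NeZero.pos p)
  set φ := AdjoinRoot.lift (Int.castRingHom K) ω hroot
  set ζ := AdjoinRoot.root (cyclotomic p ℤ)
  have hφζ : φ ζ = ω := AdjoinRoot.lift_root hroot
  have hmat : (Matrix.of fun i j => ω ^ (x i * ξ j)) =
      φ.mapMatrix (Matrix.of fun i j => ζ ^ (x i * ξ j)) := by
    ext
    simp [hφζ]
  rw [hmat, ← RingHom.map_det, map_ne_zero_iff φ (AdjoinRoot.injective_lift_cyclotomic hω hroot)]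
  refine det_pow_mul_ne_zero_of_ker_le (AdjoinRoot.cyclotomicToZMod p)
    (AdjoinRoot.cyclotomicToZMod_root p) (AdjoinRoot.ker_cyclotomicToZMod_le p) ?_ ?_ hξ hξp
  · intro h
    apply hω.ne_one (Fact.out : p.Prime).one_lt
    rw [← hφζ, h, map_one]
  · intro i j h
    exact hx (hω.pow_inj (hxp i) (hxp j) (by simpa [hφζ] using congrArg φ h))

theorem eq_zero_of_sum_pow_val_mul_eq_zero (hω : IsPrimitiveRoot ω p) {v : ZMod p → K}
    {A B : Finset (ZMod p)} (hA : ∀ x ∉ A, v x = 0) (hAB : #A ≤ #B)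
    (hv : ∀ ξ ∈ B, ∑ x, ω ^ (ξ.val * x.val) * v x = 0) : v = 0 := by
  classical
  obtain ⟨B', hB'B, hB'card⟩ := exists_subset_card_eq hAB
  let e : A ≃ B' := Fintype.equivOfCardEq (by simp [hB'card])
  have hdet := hω.det_pow_mul_ne_zero (x := fun a => (e a : ZMod p).val)
    (ξ := fun a : A => (a : ZMod p).val)
    (fun a b h => e.injective (Subtype.ext (ZMod.val_injective p h))) (fun _ => ZMod.val_lt _)
    (fun a b h => Subtype.ext (ZMod.val_injective p h)) (fun _ => ZMod.val_lt _)
  have hker : (Matrix.of fun a b : A => ω ^ ((e a : ZMod p).val * (b : ZMod p).val)) *ᵥ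
      (fun a : A => v a) = 0 := by
    funext a
    rw [Pi.zero_apply, ← hv (e a) (hB'B (e a).2), mulVec, dotProduct]
    simp only [of_apply]
    rw [sum_coe_sort A (fun x => ω ^ ((e a : ZMod p).val * x.val) * v x)]
    refine sum_subset (subset_univ A) fun x _ hx => ?_
    rw [hA x hx, mul_zero]
  funext x
  by_cases hx : x ∈ A
  · exact congrFun (eq_zero_of_mulVec_eq_zero hdet hker) ⟨x, hx⟩
  · exact hA x hx

end IsPrimitiveRoot

open Complex in
/-- Uncertainty principle for `ℤ/pℤ` (Theorem 2.5): if `f : ℤ/pℤ → ℂ` is nonzero then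
`|supp f| + |supp f̂| ≥ p + 1`, where `f̂(ξ) = ∑_x f(x) e^{-2πi ξx/p}`. -/
theorem uncertainty_zmod (p : ℕ) [Fact p.Prime] (f : ZMod p → ℂ) (hf : f ≠ 0) :
    p + 1 ≤ {x : ZMod p | f x ≠ 0}.ncard +
      {ξ : ZMod p | (∑ x : ZMod p, f x *
        Complex.exp (-2 * Real.pi * I * (ξ.val : ℂ) * (x.val : ℂ) / p)) ≠ 0}.ncard := by
  classical
  have hω : IsPrimitiveRoot (exp (-2 * Real.pi * I / p)) p := by
    rw [neg_mul, neg_mul, neg_div, exp_neg]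
    exact (isPrimitiveRoot_exp p (NeZero.ne p)).inv
  set ω : ℂ := exp (-2 * Real.pi * I / p)
  set fhat : ZMod p → ℂ := fun ξ => ∑ x, ω ^ (ξ.val * x.val) * f x
  have hfhat : ∀ ξ, ∑ x, f x * exp (-2 * Real.pi * I * (ξ.val : ℂ) * (x.val : ℂ) / p) = fhat ξ :=
    fun ξ => Finset.sum_congr rfl fun x _ => by
      rw [mul_comm, ← exp_nat_mul]
      push_cast
      ring_nf
  simp only [hfhat, Set.ncard_eq_toFinset_card', Set.toFinset_ofPred]
  by_contra hlt
  have hcard : ({x | f x ≠ 0} : Finset _).card ≤ ({ξ | fhat ξ = 0} : Finset _).card := by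
    have := Finset.card_filter_add_card_filter_not (s := Finset.univ) (fun ξ => fhat ξ = 0)
    simp only [Finset.card_univ, ZMod.card, ← ne_eq] at this
    omega
  refine hf (hω.eq_zero_of_sum_pow_val_mul_eq_zero (A := {x | f x ≠ 0}) ?_ hcard ?_)
  · intro x hx
    simpa using hx
  · intro ξ hξ
    simpa using hξ
end
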